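/- Let n ≥ 1 and m = 2n−1. Consider the boundary conditions y^{(k)}(0) = 0 and y^{(k)}(1) = 0 for k = n, n+1, …, 2n−2, together with y^{(n−1)}(1) = 0 (in total 2n−1 conditions). Then: (a) for every (2n−1) times continuously differentiable y : [0,1] → ℂ satisfying these conditions, 2·Im(∫₀¹ (−1)^n·i·y^{(2n−1)}(x)·conj(y(x)) dx) = |y^{(n−1)}(0)|², so the conditions are dissipative; (b) for the normalized system with orders k_1 = k_2 = 2n−2, k_3 = k_4 = 2n−3, …, k_{2n−3} = k_{2n−2} = n, k_{2n−1} = n−1 and leading pairs (α_{2l−1}, β_{2l−1}) = (1,0), (α_{2l}, β_{2l}) = (0,1) for l = 1,…,n−1 and (α_{2n−1}, β_{2n−1}) = (0,1), one has θ_0 = 0, where θ_0 = det(D(0)) and D(s) is the (2n−1)×(2n−1) matrix whose (j,i) entry equals α_j·ω_i^{k_j} for 1 ≤ i ≤ n−1, (α_j + s·β_j)·ω_n^{k_j} for i = n, and β_j·ω_i^{k_j} for n+1 ≤ i ≤ 2n−1. Consequently these dissipative boundary conditions are not Birkhoff regular. -/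

import Mathlib

open Finset Matrix ComplexConjugate

/-!
For odd `m`, the boundary form `B(x) = ∑_{j<m} (-1)^j y^{(m-1-j)}(x) conj(y^{(j)}(x))` telescopes
under differentiation to `B' = 2 Re (y^{(m)} conj y)`, so twice the imaginary part of the integral
is `±(B(1) - B(0))`. The boundary conditions kill every term of `B(1)` and every term of `B(0)`
except the middle one, `(-1)^{n-1} |y^{(n-1)}(0)|²`.

In `D(0)` the first `n` columns vanish outside the `n - 1` rows with `α_j = 1`, so these columns
are linearly dependent and `θ_0 = det D(0) = 0`, whatever the roots `ω_i`.
-/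

theorem ContDiff.hasDerivAt_iteratedDeriv {F : Type*} [NormedAddCommGroup F] [NormedSpace ℝ F]
    {m : ℕ} {y : ℝ → F} (hy : ContDiff ℝ m y) {j : ℕ} (hj : j < m) (x : ℝ) :
    HasDerivAt (iteratedDeriv j y) (iteratedDeriv (j + 1) y x) x := by
  rw [iteratedDeriv_succ]
  exact (hy.differentiable_iteratedDeriv j (mod_cast hj) x).hasDerivAt

noncomputable def boundaryForm (m : ℕ) (y : ℝ → ℂ) (x : ℝ) : ℂ :=
  ∑ j ∈ range m, (-1) ^ j * (iteratedDeriv (m - 1 - j) y x * conj (iteratedDeriv j y x))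

section BoundaryForm

variable {m : ℕ} {y : ℝ → ℂ}

theorem hasDerivAt_boundaryForm (hy : ContDiff ℝ m y) (x : ℝ) :
    HasDerivAt (boundaryForm m y)
      (iteratedDeriv m y x * conj (y x) - (-1) ^ m * (y x * conj (iteratedDeriv m y x))) x := by
  let f : ℕ → ℂ := fun j => (-1) ^ j * (iteratedDeriv (m - j) y x * conj (iteratedDeriv j y x))
  have hterm : ∀ j ∈ range m, HasDerivAt (fun x => (-1 : ℂ) ^ j *
      (iteratedDeriv (m - 1 - j) y x * conj (iteratedDeriv j y x))) (f j - f (j + 1)) x := by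
    intro j hj
    have hj := mem_range.mp hj
    have hlow : m - 1 - j + 1 = m - j := by omega
    have hhigh : m - (j + 1) = m - 1 - j := by omega
    refine (((hy.hasDerivAt_iteratedDeriv (by omega) x).mul
      (hy.hasDerivAt_iteratedDeriv hj x).star).const_mul _).congr_deriv ?_
    simp only [f, hlow, hhigh, pow_succ, starRingEnd_apply]
    ring
  have hsum := HasDerivAt.sum hterm
  have hends : f 0 - f m =
      iteratedDeriv m y x * conj (y x) - (-1) ^ m * (y x * conj (iteratedDeriv m y x)) := by
    simp only [f, Nat.sub_zero, Nat.sub_self, pow_zero, one_mul, iteratedDeriv_zero]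
  rw [sum_range_sub', hends, Finset.sum_fn] at hsum
  exact hsum

theorem two_mul_re_integral_iteratedDeriv_mul_conj (hm : Odd m) (hy : ContDiff ℝ m y) (a b : ℝ) :
    2 * (∫ x in a..b, iteratedDeriv m y x * conj (y x)).re
      = (boundaryForm m y b - boundaryForm m y a).re := by
  set A : ℝ → ℂ := fun x => iteratedDeriv m y x * conj (y x)
  have hA : Continuous A :=
    (hy.continuous_iteratedDeriv m le_rfl).mul (Complex.continuous_conj.comp hy.continuous)
  have hAc : Continuous fun x => conj (A x) := Complex.continuous_conj.comp hA
  have hderiv : ∀ x, HasDerivAt (boundaryForm m y) (A x + conj (A x)) x := fun x =>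
    (hasDerivAt_boundaryForm hy x).congr_deriv (by simp [A, hm.neg_one_pow, mul_comm])
  have hFTC := intervalIntegral.integral_eq_sub_of_hasDerivAt (fun x _ => hderiv x)
    ((hA.add hAc).intervalIntegrable a b)
  rw [intervalIntegral.integral_add (hA.intervalIntegrable a b) (hAc.intervalIntegrable a b),
    intervalIntegral.intervalIntegral_conj, Complex.add_conj] at hFTC
  rw [← hFTC, Complex.ofReal_re]

theorem boundaryForm_eq_zero (x : ℝ)
    (h : ∀ j < m, iteratedDeriv (m - 1 - j) y x = 0 ∨ iteratedDeriv j y x = 0) :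
    boundaryForm m y x = 0 := by
  refine sum_eq_zero fun j hj => ?_
  rcases h j (mem_range.mp hj) with h | h <;> simp [h]

theorem boundaryForm_eq_of_odd {p : ℕ} (hm : m = 2 * p + 1) (x : ℝ)
    (h : ∀ j < m, j ≠ p → iteratedDeriv (m - 1 - j) y x = 0 ∨ iteratedDeriv j y x = 0) :
    boundaryForm m y x = ((-1) ^ p * ‖iteratedDeriv p y x‖ ^ 2 : ℝ) := by
  rw [boundaryForm, sum_eq_single_of_mem p (mem_range.mpr (by omega))]
  · rw [show m - 1 - p = p by omega, Complex.mul_conj']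
    push_cast
    rfl
  · intro j hj hjp
    rcases h j (mem_range.mp hj) hjp with h | h <;> simp [h]

end BoundaryForm

section DissipativeConditions

variable {n : ℕ} {y : ℝ → ℂ}

theorem two_mul_im_integral_eq_norm_sq (hn : 1 ≤ n) (hy : ContDiff ℝ (2 * n - 1 : ℕ) y)
    (hbc : ∀ k : ℕ, n ≤ k → k ≤ 2 * n - 2 →
      iteratedDeriv k y 0 = 0 ∧ iteratedDeriv k y 1 = 0)
    (h1 : iteratedDeriv (n - 1) y 1 = 0) :
    2 * (∫ x in (0 : ℝ)..1,
        (-1 : ℂ) ^ n * Complex.I * iteratedDeriv (2 * n - 1) y x * conj (y x)).im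
      = ‖iteratedDeriv (n - 1) y 0‖ ^ 2 := by
  have hB1 : boundaryForm (2 * n - 1) y 1 = 0 := by
    refine boundaryForm_eq_zero 1 fun j hj => ?_
    rcases lt_trichotomy j (n - 1) with h | rfl | h
    · exact .inl (hbc _ (by omega) (by omega)).2
    · exact .inr h1
    · exact .inr (hbc _ (by omega) (by omega)).2
  have hB0 : boundaryForm (2 * n - 1) y 0
      = ((-1) ^ (n - 1) * ‖iteratedDeriv (n - 1) y 0‖ ^ 2 : ℝ) := by
    refine boundaryForm_eq_of_odd (by omega) 0 fun j hj hjn => ?_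
    rcases lt_or_gt_of_ne hjn with h | h
    · exact .inl (hbc _ (by omega) (by omega)).1
    · exact .inr (hbc _ (by omega) (by omega)).1
  have hre := two_mul_re_integral_iteratedDeriv_mul_conj ⟨n - 1, by omega⟩ hy 0 1
  rw [hB1, hB0, zero_sub, Complex.neg_re, Complex.ofReal_re] at hre
  have hsign : (-1 : ℝ) ^ n * (-1) ^ (n - 1) = -1 := by
    rw [← pow_add, show n + (n - 1) = 2 * (n - 1) + 1 by omega, pow_succ, pow_mul]
    norm_num
  have hint : (∫ x in (0 : ℝ)..1,
        (-1 : ℂ) ^ n * Complex.I * iteratedDeriv (2 * n - 1) y x * conj (y x))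
      = ((-1 : ℝ) ^ n : ℝ) * (Complex.I *
          ∫ x in (0 : ℝ)..1, iteratedDeriv (2 * n - 1) y x * conj (y x)) := by
    rw [← intervalIntegral.integral_const_mul, ← intervalIntegral.integral_const_mul]
    refine intervalIntegral.integral_congr fun x _ => ?_
    push_cast
    ring
  rw [hint, Complex.im_ofReal_mul, Complex.I_mul_im]
  linear_combination (-‖iteratedDeriv (n - 1) y 0‖ ^ 2) * hsign + (-1 : ℝ) ^ n * hre

end DissipativeConditions

theorem Matrix.det_eq_zero_of_card_lt {ι K : Type*} [Fintype ι] [DecidableEq ι] [Field K]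
    (M : Matrix ι ι K) (rows cols : Finset ι) (hcard : #rows < #cols)
    (hzero : ∀ j ∉ rows, ∀ i ∈ cols, M j i = 0) : M.det = 0 := by
  let B : Matrix rows cols K := M.submatrix (↑) (↑)
  obtain ⟨u, hu, hu0⟩ : ∃ u ∈ LinearMap.ker B.mulVecLin, u ≠ 0 :=
    Submodule.exists_mem_ne_zero_of_ne_bot
      (LinearMap.ker_ne_bot_of_finrank_lt (by simpa using hcard))
  let v : ι → K := fun i => if h : i ∈ cols then u ⟨i, h⟩ else 0
  have hMv : ∀ j, (M *ᵥ v) j = ∑ i : cols, M j i * u i := by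
    intro j
    rw [Matrix.mulVec, dotProduct, ← sum_subset (subset_univ cols), ← sum_coe_sort cols]
    · simp [v]
    · intro i _ hi
      simp [v, hi]
  refine Matrix.exists_mulVec_eq_zero_iff.mp ⟨v, fun hv => ?_, funext fun j => ?_⟩
  · obtain ⟨i, hi⟩ := Function.ne_iff.mp hu0
    exact hi (by simpa [v] using congrFun hv i)
  · rw [hMv]
    by_cases hj : j ∈ rows
    · exact congrFun hu ⟨j, hj⟩
    · simp [hzero j hj]

theorem det_normalizedBoundaryMatrix_eq_zero {n : ℕ} (hn : 1 ≤ n) (ω : Fin (2 * n - 1) → ℂ) :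
    (Matrix.of fun j i : Fin (2 * n - 1) =>
        (if (i : ℕ) < n then
          (if (j : ℕ) = 2 * n - 2 then (0 : ℂ) else if (j : ℕ) % 2 = 0 then 1 else 0)
         else
          (if (j : ℕ) = 2 * n - 2 then (1 : ℂ) else if (j : ℕ) % 2 = 0 then 0 else 1))
        * ω i ^ (2 * n - 2 - (j : ℕ) / 2)).det = 0 := by
  have hle : n ≤ 2 * n - 1 := by omega
  refine Matrix.det_eq_zero_of_card_lt _
    (univ.image fun r : Fin (n - 1) => (⟨2 * r, by omega⟩ : Fin (2 * n - 1)))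
    (univ.map (Fin.castLEEmb hle)) ?_ fun j hj i hi => ?_
  · calc _ ≤ n - 1 := card_image_le.trans (by simp)
      _ < _ := by rw [card_map, card_univ, Fintype.card_fin]; omega
  · obtain ⟨i, -, rfl⟩ := mem_map.mp hi
    have hj' : (j : ℕ) = 2 * n - 2 ∨ (j : ℕ) % 2 = 1 := by
      by_contra! h
      exact hj (mem_image.mpr ⟨⟨j / 2, by omega⟩, mem_univ _, Fin.ext (by dsimp only; omega)⟩)
    rcases hj' with h | h <;> simp [h, i.isLt]

theorem stmt19_general (n : ℕ) (hn : 1 ≤ n)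
    (ω : Fin (2 * n - 1) → ℂ) :
    (∀ y : ℝ → ℂ, ContDiff ℝ (2 * n - 1) y →
      (∀ k : ℕ, n ≤ k → k ≤ 2 * n - 2 →
        iteratedDeriv k y 0 = 0 ∧ iteratedDeriv k y 1 = 0) →
      iteratedDeriv (n - 1) y 1 = 0 →
      2 * (∫ x in (0:ℝ)..1,
          (-1 : ℂ) ^ n * Complex.I * iteratedDeriv (2 * n - 1) y x
            * (starRingEnd ℂ) (y x)).im
        = ‖iteratedDeriv (n - 1) y 0‖ ^ 2)
    ∧
    (Matrix.of fun j i : Fin (2 * n - 1) =>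
        (if (i : ℕ) < n then
          (if (j : ℕ) = 2 * n - 2 then (0 : ℂ) else if (j : ℕ) % 2 = 0 then 1 else 0)
         else
          (if (j : ℕ) = 2 * n - 2 then (1 : ℂ) else if (j : ℕ) % 2 = 0 then 0 else 1))
        * ω i ^ (2 * n - 2 - (j : ℕ) / 2)).det = 0 :=
  ⟨fun _ hy hbc h1 => two_mul_im_integral_eq_norm_sq hn hy hbc h1,
    det_normalizedBoundaryMatrix_eq_zero hn ω⟩

/-- an example of dissipative boundary conditions of odd order
`m = 2n−1` that are not Birkhoff regular.  The conditions are
`y^{(k)}(0) = y^{(k)}(1) = 0` for `n ≤ k ≤ 2n−2`, together with `y^{(n−1)}(1) = 0`.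
Part (a): for every admissible `y`,
`2·Im(∫₀¹ (−1)^n i y^{(2n−1)}·conj(y)) = |y^{(n−1)}(0)|²` (so they are dissipative).
Part (b): for the corresponding normalized system — orders `k_j = 2n−2−⌊j/2⌋`
(0-indexed rows `j`) and leading pairs `(1,0)` for even `j < 2n−2`, `(0,1)` for odd
`j` and for the last row `j = 2n−2` — one has `θ_0 = det D(0) = 0`, where `ω_i` are
the `(2n−1)`-th roots of `−1` enumerated with `Re(ω_i e^{iπ/(2(2n−1))})` strictly
increasing, and `D(0)` has `(j,i)` entry `α_j ω_i^{k_j}` for columns `i < n` and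
`β_j ω_i^{k_j}` for columns `i ≥ n` (0-indexed).  Hence these dissipative conditions
are not Birkhoff regular. -/
theorem stmt19 (n : ℕ) (hn : 1 ≤ n)
    (ω : Fin (2 * n - 1) → ℂ) (hω : ∀ i, ω i ^ (2 * n - 1) = -1)
    (hmono : StrictMono fun i =>
      (ω i * Complex.exp ((Real.pi : ℂ) * Complex.I / (2 * (2 * (n : ℂ) - 1)))).re) :
    (∀ y : ℝ → ℂ, ContDiff ℝ (2 * n - 1) y →
      (∀ k : ℕ, n ≤ k → k ≤ 2 * n - 2 →
        iteratedDeriv k y 0 = 0 ∧ iteratedDeriv k y 1 = 0) →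
      iteratedDeriv (n - 1) y 1 = 0 →
      2 * (∫ x in (0:ℝ)..1,
          (-1 : ℂ) ^ n * Complex.I * iteratedDeriv (2 * n - 1) y x
            * (starRingEnd ℂ) (y x)).im
        = ‖iteratedDeriv (n - 1) y 0‖ ^ 2)
    ∧
    (Matrix.of fun j i : Fin (2 * n - 1) =>
        (if (i : ℕ) < n then
          (if (j : ℕ) = 2 * n - 2 then (0 : ℂ) else if (j : ℕ) % 2 = 0 then 1 else 0)
         else
          (if (j : ℕ) = 2 * n - 2 then (1 : ℂ) else if (j : ℕ) % 2 = 0 then 0 else 1))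
        * ω i ^ (2 * n - 2 - (j : ℕ) / 2)).det = 0 :=
  stmt19_general n hn ω
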